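/- For every positive integer k and n = 2^k − 1, the matrix L^{(k)} ∈ ℝ^{(n+1)×(n+1)} defined recursively from the silver stepsizes is a Laplacian matrix: it is symmetric, all its off-diagonal entries are nonpositive, and all its row sums are zero. -/
import Mathlib

noncomputable def rho : ℝ := 1 + Real.sqrt 2

noncomputable def silver (t : ℕ) : ℝ := rho ^ ((padicValNat 2 (t + 1) : ℤ) - 1) + 1

open Finset

open Finset

lemma rho_pos : 0 < rho := by
  have := Real.sqrt_nonneg 2; rw [rho]; linarith
lemma rho_ne : rho ≠ 0 := ne_of_gt rho_pos
lemma rho_sq : rho ^ 2 = 2 * rho + 1 := by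
  have h : Real.sqrt 2 ^ 2 = 2 := Real.sq_sqrt (by norm_num)
  rw [rho]; ring_nf; linarith
lemma rho_ge_two : 2 ≤ rho := by
  have : (1:ℝ) ≤ Real.sqrt 2 := by
    rw [show (1:ℝ) = Real.sqrt 1 by simp]
    exact Real.sqrt_le_sqrt (by norm_num)
  rw [rho]; linarith
lemma rho_zpow_pos (z : ℤ) : 0 < rho ^ z := zpow_pos rho_pos z
lemma h2 (k : ℕ) : rho ^ (-(k + 1 : ℤ)) * rho ^ (k + 1) = 1 := by
  rw [← zpow_natCast rho (k+1), ← zpow_add₀ rho_ne, show -(k+1:ℤ) + (k+1:ℕ) = 0 by push_cast; ring, zpow_zero]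
lemma cancel_aux {x y c : ℝ} (hc : c ≠ 0) (h : c * x = c * y) : x = y := mul_left_cancel₀ hc h

lemma silver_pos (t : ℕ) : 0 < silver t := by
  unfold silver
  have := rho_zpow_pos ((padicValNat 2 (t + 1) : ℤ) - 1)
  linarith

lemma padic_eq (v n : ℕ) (h1 : 2 ^ v ∣ n) (h2 : ¬ 2 ^ (v + 1) ∣ n) : padicValNat 2 n = v := by
  have hn : n ≠ 0 := by rintro rfl; exact h2 (dvd_zero _)
  have hle : v ≤ padicValNat 2 n := (padicValNat_dvd_iff_le hn).mp h1
  have hlt : padicValNat 2 n < v + 1 := by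
    by_contra hc
    exact h2 ((padicValNat_dvd_iff_le hn).mpr (not_lt.mp hc))
  omega

lemma padic_shift {k m : ℕ} (h0 : 0 < m) (h : m < 2 ^ k) :
    padicValNat 2 (2 ^ k + m) = padicValNat 2 m := by
  set v := padicValNat 2 m with hv
  have hdvd : 2 ^ v ∣ m := pow_padicValNat_dvd
  have hnd : ¬ 2 ^ (v + 1) ∣ m := pow_succ_padicValNat_not_dvd h0.ne'
  have hvk : v < k := by
    have : 2 ^ v ≤ m := Nat.le_of_dvd h0 hdvd
    have := this.trans_lt h
    exact (Nat.pow_lt_pow_iff_right (by norm_num)).mp this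
  apply padic_eq
  · exact Dvd.dvd.add (pow_dvd_pow 2 (by omega)) hdvd
  · intro hd
    exact hnd ((Nat.dvd_add_right (pow_dvd_pow 2 (by omega))).mp hd)

lemma silver_shift {k t : ℕ} (h : t + 1 < 2 ^ k) : silver (2 ^ k + t) = silver t := by
  unfold silver
  rw [show 2 ^ k + t + 1 = 2 ^ k + (t + 1) by ring, padic_shift (by omega) h]

lemma silver_two_pow (k : ℕ) : silver (2 ^ k - 1) = rho ^ ((k : ℤ) - 1) + 1 := by
  unfold silver
  rw [Nat.sub_add_cancel Nat.one_le_two_pow, padicValNat.prime_pow]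

lemma sum_split (f : ℕ → ℝ) (n : ℕ) :
    ∑ t ∈ range (2 * n + 1), f t
      = (∑ t ∈ range n, f t) + f n + ∑ t ∈ range n, f (n + 1 + t) := by
  rw [show 2 * n + 1 = n + (n + 1) by ring, Finset.sum_range_add, Finset.sum_range_succ']
  have he : ∑ i ∈ range n, f (n + (i + 1)) = ∑ t ∈ range n, f (n + 1 + t) := by
    apply Finset.sum_congr rfl; intro t ht; congr 1; omega
  rw [he]
  simp only [Nat.add_zero]
  rw [add_comm (∑ t ∈ range n, f (n + 1 + t)) (f n), ← add_assoc]

lemma two_pow_succ (k : ℕ) : 2 ^ (k + 1) - 1 = 2 * (2 ^ k - 1) + 1 := by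
  have : 1 ≤ 2 ^ k := Nat.one_le_two_pow
  omega

lemma silver_sum (k : ℕ) : ∑ t ∈ range (2 ^ k - 1), silver t = rho ^ k - 1 := by
  induction k with
  | zero => simp
  | succ k ih =>
    rw [two_pow_succ, sum_split]
    have hshift : ∀ t ∈ range (2 ^ k - 1), silver (2 ^ k - 1 + 1 + t) = silver t := by
      intro t ht
      rw [mem_range] at ht
      rw [show 2 ^ k - 1 + 1 + t = 2 ^ k + t by have := Nat.one_le_two_pow (n := k); omega]
      exact silver_shift (by have := Nat.one_le_two_pow (n := k); omega)
    rw [Finset.sum_congr rfl hshift, ih, silver_two_pow]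
    have h3 : rho ^ ((k : ℤ) - 1) * rho = rho ^ k := by
      rw [← zpow_natCast rho k, ← zpow_add_one₀ rho_ne]; norm_num
    apply cancel_aux rho_ne
    linear_combination (-(rho ^ k)) * rho_sq + h3

/-- The auxiliary sequence c^{(k)} (zero-based indexing of the 2^k − 1 entries):
c^{(1)} = [2(ρ−1)],
c^{(k+1)} = [π^{(k)}, (1+1/ρ^k)(ρ^{k−1}+1), ρ c^{(k)} − (ρ−1−1/ρ^k) π^{(k)}]. -/
noncomputable def csil : ℕ → ℕ → ℝ
  | 0, _ => 0
  | 1, _ => 2 * (rho - 1)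
  | (k+2), j =>
      let n := 2 ^ (k + 1) - 1
      if j < n then silver j
      else if j = n then (1 + rho ^ (-(k + 1 : ℤ))) * (rho ^ k + 1)
      else rho * csil (k+1) (j - n - 1) - (rho - 1 - rho ^ (-(k + 1 : ℤ))) * silver (j - n - 1)

/-- d^{(k)} := c^{(k)} − π^{(k)} (entrywise, zero-based). -/
noncomputable def dN (k j : ℕ) : ℝ := csil k j - silver j

lemma csil_lo {k j : ℕ} (h : j < 2 ^ (k + 1) - 1) : csil (k+2) j = silver j := by
  rw [csil]; simp [h]

lemma csil_mid (k : ℕ) :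
    csil (k+2) (2 ^ (k + 1) - 1) = (1 + rho ^ (-(k + 1 : ℤ))) * (rho ^ k + 1) := by
  rw [csil]; simp

lemma csil_hi' {k t : ℕ} (h : t < 2 ^ (k + 1) - 1) :
    csil (k+2) (2 ^ (k + 1) + t)
      = rho * csil (k+1) t - (rho - 1 - rho ^ (-(k + 1 : ℤ))) * silver t := by
  rw [csil]
  have h1 : ¬ (2 ^ (k+1) + t < 2 ^ (k+1) - 1) := by omega
  have h2 : ¬ (2 ^ (k+1) + t = 2 ^ (k+1) - 1) := by omega
  simp only [h1, h2, if_false]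
  rw [show 2 ^ (k+1) + t - (2 ^ (k+1) - 1) - 1 = t by omega]

lemma dN_lo {k j : ℕ} (h : j < 2 ^ (k + 1) - 1) : dN (k+2) j = 0 := by
  rw [dN, csil_lo h]; ring

lemma zpow_cast_k (k : ℕ) : rho ^ ((k + 1 : ℤ) - 1) = rho ^ k := by
  rw [show (k + 1 : ℤ) - 1 = (k : ℤ) by ring, zpow_natCast]

lemma dN_mid (k : ℕ) :
    dN (k+2) (2 ^ (k + 1) - 1) = rho ^ (-(k + 1 : ℤ)) * (rho ^ k + 1) := by
  rw [dN, csil_mid, silver_two_pow, show ((k+1 : ℕ) : ℤ) - 1 = (k:ℤ) + 1 - 1 by push_cast; ring,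
    zpow_cast_k]
  ring

lemma dN_hi {k t : ℕ} (h : t < 2 ^ (k + 1) - 1) :
    dN (k+2) (2 ^ (k + 1) + t)
      = rho * dN (k+1) t + rho ^ (-(k + 1 : ℤ)) * silver t := by
  rw [dN, csil_hi' h, silver_shift (by omega), dN]
  ring

lemma csil_sum : ∀ k : ℕ, ∑ j ∈ range (2 ^ k - 1), csil k j = 2 * (rho ^ k - 1)
  | 0 => by simp
  | 1 => by simp [csil]
  | (k+2) => by
    have ih := csil_sum (k+1)
    rw [show (2:ℕ) ^ (k+2) - 1 = 2 * (2 ^ (k+1) - 1) + 1 from two_pow_succ (k+1), sum_split]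
    have e1 : ∑ j ∈ range (2 ^ (k+1) - 1), csil (k+2) j = rho ^ (k+1) - 1 := by
      rw [Finset.sum_congr rfl fun j hj => csil_lo (mem_range.mp hj), silver_sum]
    have e2 : ∑ t ∈ range (2 ^ (k+1) - 1), csil (k+2) (2 ^ (k+1) - 1 + 1 + t)
        = rho * (2 * (rho ^ (k+1) - 1)) - (rho - 1 - rho ^ (-(k + 1 : ℤ))) * (rho ^ (k+1) - 1) := by
      have hpt : ∀ t ∈ range (2 ^ (k+1) - 1), csil (k+2) (2 ^ (k+1) - 1 + 1 + t)
          = rho * csil (k+1) t - (rho - 1 - rho ^ (-(k + 1 : ℤ))) * silver t := by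
        intro t ht
        rw [mem_range] at ht
        rw [show 2 ^ (k+1) - 1 + 1 + t = 2 ^ (k+1) + t by
          have := Nat.one_le_two_pow (n := k+1); omega]
        exact csil_hi' ht
      rw [Finset.sum_congr rfl hpt, Finset.sum_sub_distrib, ← Finset.mul_sum, ← Finset.mul_sum,
        ih, silver_sum]
    rw [e1, e2, csil_mid]
    apply cancel_aux (pow_ne_zero (k+1) rho_ne)
    linear_combination (-(rho ^ k) - rho * (rho ^ k) ^ 2) * rho_sq + (rho ^ k + rho * rho ^ k) * h2 k

lemma dN_sum (k : ℕ) : ∑ j ∈ range (2 ^ k - 1), dN k j = rho ^ k - 1 := by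
  simp only [dN, Finset.sum_sub_distrib, csil_sum, silver_sum]
  ring

lemma rho_inv : rho ^ (-1 : ℤ) = rho - 2 := by
  rw [zpow_neg_one]
  exact inv_eq_of_mul_eq_one_right (by linear_combination rho_sq)

lemma dN_one : dN 1 0 = rho - 1 := by
  rw [dN, csil]
  unfold silver
  rw [show (padicValNat 2 (0 + 1) : ℤ) - 1 = -1 by norm_num, rho_inv]
  ring

lemma dN_nonneg : ∀ k : ℕ, ∀ j < 2 ^ k - 1, 0 ≤ dN k j
  | 0 => by intro j hj; omega
  | 1 => by
    intro j hj
    interval_cases j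
    rw [dN_one]; linarith [rho_ge_two]
  | (k+2) => by
    intro j hj
    rcases lt_trichotomy j (2 ^ (k+1) - 1) with h | h | h
    · rw [dN_lo h]
    · rw [h, dN_mid]
      have := rho_zpow_pos (-(k + 1 : ℤ))
      have : (0:ℝ) < rho ^ k := pow_pos rho_pos k
      positivity
    · have hj' : j - 2 ^ (k+1) < 2 ^ (k+1) - 1 := by
        have h2 : (2:ℕ) ^ (k+2) - 1 = 2 * (2 ^ (k+1) - 1) + 1 := two_pow_succ (k+1)
        omega
      have hrw : j = 2 ^ (k+1) + (j - 2 ^ (k+1)) := by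
        have := Nat.one_le_two_pow (n := k+1); omega
      rw [hrw, dN_hi hj']
      have h1 := dN_nonneg (k+1) _ hj'
      have h2 := silver_pos (j - 2 ^ (k+1))
      have h3 := rho_zpow_pos (-(k + 1 : ℤ))
      nlinarith [rho_pos]

lemma csil_nonneg (k : ℕ) {j : ℕ} (hj : j < 2 ^ k - 1) : 0 ≤ csil k j := by
  have h1 := dN_nonneg k j hj
  have h2 := silver_pos j
  rw [dN] at h1
  linarith

/-- The matrix L̄^{(k)} ∈ ℝ^{(2^k−1)×(2^k−1)} (zero-based entries), recursively defined:
L̄^{(1)} = [2(ρ−1)], and L̄^{(k+1)} is the block matrix built from L̄^{(k)} + dd^T (top-left),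
ρ²(L̄^{(k)} + dd^T) (bottom-right), a middle row/column [−ρ^k d^T, (ρ^{k−1}+1)(ρ^{k+1}+1),
−ρ(π^{(k)})^T], minus (c^{(k+1)} − π^{(k+1)})(c^{(k+1)} − π^{(k+1)})^T, where d = c^{(k)} − π^{(k)}. -/
noncomputable def LbarN : ℕ → ℕ → ℕ → ℝ
  | 0, _, _ => 0
  | 1, _, _ => 2 * (rho - 1)
  | (k+2), i, j =>
      let n := 2 ^ (k + 1) - 1
      (if i < n ∧ j < n then LbarN (k+1) i j + dN (k+1) i * dN (k+1) j
       else if i < n ∧ j = n then -(rho ^ (k+1)) * dN (k+1) i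
       else if i = n ∧ j < n then -(rho ^ (k+1)) * dN (k+1) j
       else if i = n ∧ j = n then (rho ^ k + 1) * (rho ^ (k + 2) + 1)
       else if i = n then -rho * silver (j - n - 1)
       else if j = n then -rho * silver (i - n - 1)
       else if n < i ∧ n < j then
         rho ^ 2 * (LbarN (k+1) (i - n - 1) (j - n - 1) + dN (k+1) (i - n - 1) * dN (k+1) (j - n - 1))
       else 0)
      - dN (k+2) i * dN (k+2) j

section branches
variable {k i j : ℕ}

lemma Lbar_b1 (hi : i < 2 ^ (k+1) - 1) (hj : j < 2 ^ (k+1) - 1) :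
    LbarN (k+2) i j = LbarN (k+1) i j + dN (k+1) i * dN (k+1) j := by
  rw [LbarN]
  simp only [hi, hj, and_self, if_true, true_and, dN_lo hi, dN_lo hj]
  ring

lemma Lbar_b2 (hi : i < 2 ^ (k+1) - 1) :
    LbarN (k+2) i (2 ^ (k+1) - 1) = -(rho ^ (k+1)) * dN (k+1) i := by
  rw [LbarN]
  simp only [hi, lt_irrefl, and_false, and_true, if_false, if_true, true_and, dN_lo hi]
  ring

lemma Lbar_b3 (hj : j < 2 ^ (k+1) - 1) :
    LbarN (k+2) (2 ^ (k+1) - 1) j = -(rho ^ (k+1)) * dN (k+1) j := by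
  rw [LbarN]
  have h1 : ¬ (2 ^ (k+1) - 1 < 2 ^ (k+1) - 1) := lt_irrefl _
  have h2 : ¬ (j = 2 ^ (k+1) - 1) := by omega
  simp only [h1, h2, hj, false_and, and_false, and_true, if_false, if_true, true_and, dN_lo hj]
  ring

lemma Lbar_b4 :
    LbarN (k+2) (2 ^ (k+1) - 1) (2 ^ (k+1) - 1)
      = (rho ^ k + 1) * (rho ^ (k + 2) + 1) - dN (k+2) (2 ^ (k+1) - 1) ^ 2 := by
  rw [LbarN]
  simp only [lt_irrefl, false_and, and_false, and_self, if_false, if_true]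
  ring

lemma Lbar_b5 (hj : 2 ^ (k+1) - 1 < j) :
    LbarN (k+2) (2 ^ (k+1) - 1) j
      = -rho * silver (j - (2 ^ (k+1) - 1) - 1)
        - dN (k+2) (2 ^ (k+1) - 1) * dN (k+2) j := by
  rw [LbarN]
  have h1 : ¬ (2 ^ (k+1) - 1 < 2 ^ (k+1) - 1) := lt_irrefl _
  have h2 : ¬ (j < 2 ^ (k+1) - 1) := by omega
  have h3 : ¬ (j = 2 ^ (k+1) - 1) := by omega
  simp only [h1, h2, h3, false_and, and_false, and_true, if_false, if_true]

lemma Lbar_b6 (hi : 2 ^ (k+1) - 1 < i) :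
    LbarN (k+2) i (2 ^ (k+1) - 1)
      = -rho * silver (i - (2 ^ (k+1) - 1) - 1)
        - dN (k+2) i * dN (k+2) (2 ^ (k+1) - 1) := by
  rw [LbarN]
  have h1 : ¬ (i < 2 ^ (k+1) - 1) := by omega
  have h2 : ¬ (i = 2 ^ (k+1) - 1) := by omega
  simp only [h1, h2, lt_irrefl, false_and, and_false, and_true, if_false, if_true, and_self]

lemma Lbar_b7 (hi : 2 ^ (k+1) - 1 < i) (hj : 2 ^ (k+1) - 1 < j) :
    LbarN (k+2) i j
      = rho ^ 2 * (LbarN (k+1) (i - (2 ^ (k+1) - 1) - 1) (j - (2 ^ (k+1) - 1) - 1)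
          + dN (k+1) (i - (2 ^ (k+1) - 1) - 1) * dN (k+1) (j - (2 ^ (k+1) - 1) - 1))
        - dN (k+2) i * dN (k+2) j := by
  rw [LbarN]
  have h1 : ¬ (i < 2 ^ (k+1) - 1) := by omega
  have h2 : ¬ (i = 2 ^ (k+1) - 1) := by omega
  have h3 : ¬ (j < 2 ^ (k+1) - 1) := by omega
  have h4 : ¬ (j = 2 ^ (k+1) - 1) := by omega
  simp only [h1, h2, h3, h4, hi, hj, false_and, and_false, and_self, if_false, if_true]

lemma Lbar_b8 (hi : i < 2 ^ (k+1) - 1) (hj : 2 ^ (k+1) - 1 < j) :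
    LbarN (k+2) i j = 0 := by
  rw [LbarN]
  have h2 : ¬ (i = 2 ^ (k+1) - 1) := by omega
  have h3 : ¬ (j < 2 ^ (k+1) - 1) := by omega
  have h4 : ¬ (j = 2 ^ (k+1) - 1) := by omega
  have h5 : ¬ (2 ^ (k+1) - 1 < i) := by omega
  simp only [h2, h3, h4, h5, hi, false_and, and_false, and_true, true_and, if_false, dN_lo hi]
  ring

lemma Lbar_b9 (hi : 2 ^ (k+1) - 1 < i) (hj : j < 2 ^ (k+1) - 1) :
    LbarN (k+2) i j = 0 := by
  rw [LbarN]
  have h1 : ¬ (i < 2 ^ (k+1) - 1) := by omega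
  have h2 : ¬ (i = 2 ^ (k+1) - 1) := by omega
  have h4 : ¬ (j = 2 ^ (k+1) - 1) := by omega
  have h5 : ¬ (2 ^ (k+1) - 1 < j) := by omega
  simp only [h1, h2, h4, h5, hi, hj, false_and, and_false, and_true, true_and, if_false, dN_lo hj]
  ring

end branches

lemma LbarN_symm : ∀ k i j : ℕ, LbarN k i j = LbarN k j i
  | 0, _, _ => rfl
  | 1, _, _ => rfl
  | (k+2), i, j => by
    rcases lt_trichotomy i (2 ^ (k+1) - 1) with hi | hi | hi <;>
      rcases lt_trichotomy j (2 ^ (k+1) - 1) with hj | hj | hj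
    · rw [Lbar_b1 hi hj, Lbar_b1 hj hi, LbarN_symm (k+1) i j]; ring
    · rw [hj, Lbar_b2 hi, Lbar_b3 hi]
    · rw [Lbar_b8 hi hj, Lbar_b9 hj hi]
    · rw [hi, Lbar_b3 hj, Lbar_b2 hj]
    · rw [hi, hj]
    · rw [hi, Lbar_b5 hj, Lbar_b6 hj]; ring
    · rw [Lbar_b9 hi hj, Lbar_b8 hj hi]
    · rw [hj, Lbar_b6 hi, Lbar_b5 hi]; ring
    · rw [Lbar_b7 hi hj, Lbar_b7 hj hi, LbarN_symm (k+1) (i - (2 ^ (k+1) - 1) - 1) (j - (2 ^ (k+1) - 1) - 1)]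
      ring

lemma Mnonpos : ∀ k : ℕ, ∀ i j : ℕ, i < 2 ^ k - 1 → j < 2 ^ k - 1 → i ≠ j →
    LbarN k i j + dN k i * dN k j ≤ 0
  | 0 => by intro i j hi; omega
  | 1 => by intro i j hi hj hij; omega
  | (k+2) => by
    intro i j hi hj hij
    have hN : (2:ℕ) ^ (k+2) - 1 = 2 * (2 ^ (k+1) - 1) + 1 := two_pow_succ (k+1)
    have hrp := rho_pos
    rcases lt_trichotomy i (2 ^ (k+1) - 1) with h1 | h1 | h1 <;>
      rcases lt_trichotomy j (2 ^ (k+1) - 1) with h2 | h2 | h2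
    · rw [Lbar_b1 h1 h2, dN_lo h1, dN_lo h2]
      have := Mnonpos (k+1) i j h1 h2 hij
      linarith
    · rw [h2, Lbar_b2 h1, dN_lo h1]
      have := dN_nonneg (k+1) i h1
      have := pow_pos rho_pos (k+1)
      nlinarith
    · rw [Lbar_b8 h1 h2, dN_lo h1]; linarith
    · rw [h1, Lbar_b3 h2, dN_lo h2]
      have := dN_nonneg (k+1) j h2
      have := pow_pos rho_pos (k+1)
      nlinarith
    · omega
    · rw [h1, Lbar_b5 h2]
      have := silver_pos (j - (2 ^ (k+1) - 1) - 1)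
      nlinarith
    · rw [Lbar_b9 h1 h2, dN_lo h2]; linarith
    · rw [h2, Lbar_b6 h1]
      have := silver_pos (i - (2 ^ (k+1) - 1) - 1)
      nlinarith
    · rw [Lbar_b7 h1 h2]
      have hi' : i - (2 ^ (k+1) - 1) - 1 < 2 ^ (k+1) - 1 := by omega
      have hj' : j - (2 ^ (k+1) - 1) - 1 < 2 ^ (k+1) - 1 := by omega
      have hij' : i - (2 ^ (k+1) - 1) - 1 ≠ j - (2 ^ (k+1) - 1) - 1 := by omega
      have := Mnonpos (k+1) _ _ hi' hj' hij'
      nlinarith [pow_pos rho_pos 2]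

lemma Lbar_rowsum : ∀ k : ℕ, ∀ i < 2 ^ k - 1, ∑ j ∈ range (2 ^ k - 1), LbarN k i j = csil k i
  | 0 => by intro i hi; omega
  | 1 => by
    intro i hi
    interval_cases i
    show ∑ j ∈ range (2 ^ 1 - 1), LbarN 1 0 j = csil 1 0
    norm_num [LbarN, csil]
  | (k+2) => by
    intro i hi
    have hone : 1 ≤ (2:ℕ) ^ (k+1) := Nat.one_le_two_pow
    have hN : (2:ℕ) ^ (k+2) - 1 = 2 * (2 ^ (k+1) - 1) + 1 := two_pow_succ (k+1)
    rw [hN, sum_split]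
    have hSd := dN_sum (k+1)
    have hSs := silver_sum (k+1)
    have hiv := h2 k
    rcases lt_trichotomy i (2 ^ (k+1) - 1) with h1 | h1 | h1
    · -- i < n
      have e1 : ∑ j ∈ range (2 ^ (k+1) - 1), LbarN (k+2) i j
          = csil (k+1) i + dN (k+1) i * (rho ^ (k+1) - 1) := by
        rw [Finset.sum_congr rfl fun j hj => Lbar_b1 h1 (mem_range.mp hj),
          Finset.sum_add_distrib, ← Finset.mul_sum, Lbar_rowsum (k+1) i h1, hSd]
      have e2 : ∑ t ∈ range (2 ^ (k+1) - 1), LbarN (k+2) i (2 ^ (k+1) - 1 + 1 + t) = 0 := by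
        rw [Finset.sum_congr rfl fun t ht => Lbar_b8 h1 (by omega), Finset.sum_const, smul_zero]
      rw [e1, e2, Lbar_b2 h1, csil_lo h1]
      have hd : dN (k+1) i = csil (k+1) i - silver i := rfl
      rw [hd]; ring
    · -- i = n
      subst h1
      have e1 : ∑ j ∈ range (2 ^ (k+1) - 1), LbarN (k+2) (2 ^ (k+1) - 1) j
          = -(rho ^ (k+1)) * (rho ^ (k+1) - 1) := by
        rw [Finset.sum_congr rfl fun j hj => Lbar_b3 (mem_range.mp hj), ← Finset.mul_sum, hSd]
      have e2 : ∑ t ∈ range (2 ^ (k+1) - 1), LbarN (k+2) (2 ^ (k+1) - 1) (2 ^ (k+1) - 1 + 1 + t)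
          = -rho * (rho ^ (k+1) - 1)
            - dN (k+2) (2 ^ (k+1) - 1) * rho * (rho ^ (k+1) - 1)
            - dN (k+2) (2 ^ (k+1) - 1) * rho ^ (-(k + 1 : ℤ)) * (rho ^ (k+1) - 1) := by
        have hpt : ∀ t ∈ range (2 ^ (k+1) - 1),
            LbarN (k+2) (2 ^ (k+1) - 1) (2 ^ (k+1) - 1 + 1 + t)
              = -rho * silver t
                - (dN (k+2) (2 ^ (k+1) - 1) * rho) * dN (k+1) t
                - (dN (k+2) (2 ^ (k+1) - 1) * rho ^ (-(k + 1 : ℤ))) * silver t := by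
          intro t ht
          rw [mem_range] at ht
          rw [Lbar_b5 (by omega), show 2 ^ (k+1) - 1 + 1 + t - (2 ^ (k+1) - 1) - 1 = t by omega,
            show 2 ^ (k+1) - 1 + 1 + t = 2 ^ (k+1) + t by omega, dN_hi ht]
          ring
        rw [Finset.sum_congr rfl hpt]
        simp only [Finset.sum_sub_distrib, ← Finset.mul_sum]
        rw [hSd, hSs]
      rw [e1, e2, Lbar_b4, csil_mid, dN_mid]
      apply cancel_aux (c := (rho ^ (k+1)) ^ 2) (pow_ne_zero 2 (pow_ne_zero (k+1) rho_ne))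
      linear_combination (rho ^ k + (rho ^ k) ^ 2) * rho_sq
        + (-(rho ^ k) - (rho ^ k) ^ 2 - 2 * rho * rho ^ k - 2 * rho * (rho ^ k) ^ 2
           - rho * (rho ^ k) ^ 2 * rho ^ (-(k + 1 : ℤ)) - rho * (rho ^ k) ^ 3 * rho ^ (-(k + 1 : ℤ))
           + rho ^ 2 * rho ^ k + rho ^ 2 * (rho ^ k) ^ 2
           - rho ^ 2 * (rho ^ k) ^ 2 * rho ^ (-(k + 1 : ℤ))
           - rho ^ 2 * (rho ^ k) ^ 3 * rho ^ (-(k + 1 : ℤ))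
           - rho ^ 3 * (rho ^ k) ^ 2 - rho ^ 3 * (rho ^ k) ^ 3) * hiv
    · -- i > n
      obtain ⟨i', rfl⟩ : ∃ i', i = 2 ^ (k+1) + i' := ⟨i - 2 ^ (k+1), by omega⟩
      have hi' : i' < 2 ^ (k+1) - 1 := by omega
      have e1 : ∑ j ∈ range (2 ^ (k+1) - 1), LbarN (k+2) (2 ^ (k+1) + i') j = 0 := by
        rw [Finset.sum_congr rfl fun j hj => Lbar_b9 (by omega) (mem_range.mp hj),
          Finset.sum_const, smul_zero]
      have e2 : ∑ t ∈ range (2 ^ (k+1) - 1), LbarN (k+2) (2 ^ (k+1) + i') (2 ^ (k+1) - 1 + 1 + t)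
          = rho ^ 2 * csil (k+1) i' + rho ^ 2 * dN (k+1) i' * (rho ^ (k+1) - 1)
            - dN (k+2) (2 ^ (k+1) + i') * rho * (rho ^ (k+1) - 1)
            - dN (k+2) (2 ^ (k+1) + i') * rho ^ (-(k + 1 : ℤ)) * (rho ^ (k+1) - 1) := by
        have hpt : ∀ t ∈ range (2 ^ (k+1) - 1),
            LbarN (k+2) (2 ^ (k+1) + i') (2 ^ (k+1) - 1 + 1 + t)
              = rho ^ 2 * LbarN (k+1) i' t
                + (rho ^ 2 * dN (k+1) i') * dN (k+1) t
                - (dN (k+2) (2 ^ (k+1) + i') * rho) * dN (k+1) t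
                - (dN (k+2) (2 ^ (k+1) + i') * rho ^ (-(k + 1 : ℤ))) * silver t := by
          intro t ht
          rw [mem_range] at ht
          rw [Lbar_b7 (by omega) (by omega),
            show 2 ^ (k+1) + i' - (2 ^ (k+1) - 1) - 1 = i' by omega,
            show 2 ^ (k+1) - 1 + 1 + t - (2 ^ (k+1) - 1) - 1 = t by omega,
            show 2 ^ (k+1) - 1 + 1 + t = 2 ^ (k+1) + t by omega, dN_hi ht]
          ring
        rw [Finset.sum_congr rfl hpt]
        simp only [Finset.sum_add_distrib, Finset.sum_sub_distrib, ← Finset.mul_sum]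
        rw [Lbar_rowsum (k+1) i' hi', hSd, hSs]
      have hmid : LbarN (k+2) (2 ^ (k+1) + i') (2 ^ (k+1) - 1)
          = -rho * silver i'
            - dN (k+2) (2 ^ (k+1) + i') * (rho ^ (-(k + 1 : ℤ)) * (rho ^ k + 1)) := by
        rw [Lbar_b6 (by omega), show 2 ^ (k+1) + i' - (2 ^ (k+1) - 1) - 1 = i' by omega, dN_mid]
      rw [e1, e2, hmid, show csil (k+2) (2 ^ (k+1) + i')
          = rho * csil (k+1) i' - (rho - 1 - rho ^ (-(k + 1 : ℤ))) * silver i' from csil_hi' hi',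
        dN_hi hi', show dN (k+1) i' = csil (k+1) i' - silver i' from rfl]
      apply cancel_aux (c := (rho ^ (k+1)) ^ 2) (pow_ne_zero 2 (pow_ne_zero (k+1) rho_ne))
      linear_combination (rho ^ k * silver i' + rho ^ 2 * (rho ^ k) ^ 2 * csil (k+1) i') * rho_sq
        + (-(rho ^ k * silver i') - 2 * rho * rho ^ k * silver i'
           - rho * (rho ^ k) ^ 2 * rho ^ (-(k + 1 : ℤ)) * silver i'
           + rho ^ 2 * rho ^ k * silver i'
           - rho ^ 2 * (rho ^ k) ^ 2 * csil (k+1) i'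
           + rho ^ 2 * (rho ^ k) ^ 2 * silver i'
           - rho ^ 2 * (rho ^ k) ^ 2 * rho ^ (-(k + 1 : ℤ)) * silver i'
           - rho ^ 3 * (rho ^ k) ^ 2 * csil (k+1) i') * hiv

/-- The Laplacian matrix L^{(k)} ∈ ℝ^{2^k × 2^k}:
L^{(k)} = [[L̄^{(k)}, −(c^{(k)})^T], [−c^{(k)}, 2(ρ^k − 1)]] (zero-based entries). -/
noncomputable def LmatN (k i j : ℕ) : ℝ :=
  let n := 2 ^ k - 1
  if i < n ∧ j < n then LbarN k i j
  else if i < n then -(csil k i)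
  else if j < n then -(csil k j)
  else 2 * (rho ^ k - 1)

lemma Lmat_lo {k i j : ℕ} (hi : i < 2 ^ k - 1) (hj : j < 2 ^ k - 1) :
    LmatN k i j = LbarN k i j := by
  unfold LmatN; simp [hi, hj]

lemma Lmat_right {k i : ℕ} (hi : i < 2 ^ k - 1) : LmatN k i (2 ^ k - 1) = -(csil k i) := by
  unfold LmatN; simp [hi]

lemma Lmat_bot {k j : ℕ} (hj : j < 2 ^ k - 1) : LmatN k (2 ^ k - 1) j = -(csil k j) := by
  unfold LmatN
  simp [hj, lt_irrefl]

lemma Lmat_corner (k : ℕ) : LmatN k (2 ^ k - 1) (2 ^ k - 1) = 2 * (rho ^ k - 1) := by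
  unfold LmatN; simp

lemma LmatN_symm (k i j : ℕ) : LmatN k i j = LmatN k j i := by
  rcases lt_trichotomy i (2 ^ k - 1) with hi | hi | hi <;>
    rcases lt_trichotomy j (2 ^ k - 1) with hj | hj | hj
  · rw [Lmat_lo hi hj, Lmat_lo hj hi, LbarN_symm]
  · rw [hj, Lmat_right hi, Lmat_bot hi]
  · unfold LmatN
    have h1 : ¬ (j < 2 ^ k - 1) := by omega
    simp [hi, h1]
  · rw [hi, Lmat_bot hj, Lmat_right hj]
  · rw [hi, hj]
  · unfold LmatN
    have h1 : ¬ (j < 2 ^ k - 1) := by omega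
    have h2 : ¬ (2 ^ k - 1 < 2 ^ k - 1) := by omega
    simp [hi, h1, lt_irrefl]
  · unfold LmatN
    have h1 : ¬ (i < 2 ^ k - 1) := by omega
    simp [hj, h1]
  · unfold LmatN
    have h1 : ¬ (i < 2 ^ k - 1) := by omega
    simp [hj, h1, lt_irrefl]
  · unfold LmatN
    have h1 : ¬ (i < 2 ^ k - 1) := by omega
    have h2 : ¬ (j < 2 ^ k - 1) := by omega
    simp [h1, h2]

/-- The vector −e_1 + e_{n+1} ∈ ℝ^{2^k} (zero-based: −1 in entry 0, +1 in entry 2^k − 1). -/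
noncomputable def vN (k t : ℕ) : ℝ :=
  if t = 0 then -1 else if t = 2 ^ k - 1 then 1 else 0

/-- The bordered matrix S^{(k)} = [[1/√2, (−e_1+e_{n+1})^T], [−e_1+e_{n+1}, L^{(k)}]]. -/
noncomputable def SmatN (k i j : ℕ) : ℝ :=
  if i = 0 ∧ j = 0 then 1 / Real.sqrt 2
  else if i = 0 then vN k (j - 1)
  else if j = 0 then vN k (i - 1)
  else LmatN k (i - 1) (j - 1)

/-- for every positive integer k, the matrix L^{(k)} ∈ ℝ^{2^k × 2^k}
(with n = 2^k − 1) is Laplacian: symmetric, nonpositive off-diagonal entries,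
and all row sums zero. -/
theorem Lmat_laplacian (k : ℕ) (hk : 1 ≤ k) :
    (Matrix.of fun i j : Fin (2 ^ k) => LmatN k i j).IsSymm ∧
    (∀ i j : Fin (2 ^ k), i ≠ j → LmatN k i j ≤ 0) ∧
    (∀ i : Fin (2 ^ k), ∑ j : Fin (2 ^ k), LmatN k i j = 0) := by
  have hone : 1 ≤ (2:ℕ) ^ k := Nat.one_le_two_pow
  refine ⟨?_, ?_, ?_⟩
  · ext i j
    exact LmatN_symm k j i
  · intro i j hij
    have hij' : (i : ℕ) ≠ (j : ℕ) := fun h => hij (Fin.ext h)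
    have hi := i.isLt
    have hj := j.isLt
    rcases lt_trichotomy (i : ℕ) (2 ^ k - 1) with h1 | h1 | h1 <;>
      rcases lt_trichotomy (j : ℕ) (2 ^ k - 1) with h2 | h2 | h2
    · rw [Lmat_lo h1 h2]
      have hM := Mnonpos k i j h1 h2 hij'
      have hd1 := dN_nonneg k i h1
      have hd2 := dN_nonneg k j h2
      nlinarith
    · rw [h2, Lmat_right h1]
      have := csil_nonneg k h1
      linarith
    · omega
    · rw [h1, Lmat_bot h2]
      have := csil_nonneg k h2
      linarith
    · omega
    · omega
    · omega
    · omega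
    · omega
  · intro i
    rw [Fin.sum_univ_eq_sum_range (fun j => LmatN k (i : ℕ) j) (2 ^ k)]
    have hsplit : ∑ j ∈ range (2 ^ k), LmatN k (i : ℕ) j
        = (∑ j ∈ range (2 ^ k - 1), LmatN k (i : ℕ) j) + LmatN k (i : ℕ) (2 ^ k - 1) := by
      have h := Finset.sum_range_succ (fun j => LmatN k (i : ℕ) j) (2 ^ k - 1)
      rw [show (2:ℕ) ^ k - 1 + 1 = 2 ^ k from by omega] at h
      exact h
    rw [hsplit]
    have hi := i.isLt
    rcases lt_trichotomy (i : ℕ) (2 ^ k - 1) with h1 | h1 | h1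
    · rw [Finset.sum_congr rfl fun j hj => Lmat_lo h1 (mem_range.mp hj), Lmat_right h1,
        Lbar_rowsum k i h1]
      ring
    · rw [h1, Lmat_corner,
        Finset.sum_congr rfl fun j hj => Lmat_bot (mem_range.mp hj)]
      rw [Finset.sum_neg_distrib, csil_sum]
      ring
    · omega
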